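/- arXiv:2109.13377 — 3 statements merged into one kernel-verified Lean document; each statement's English description precedes it below -/
import Mathlib

section
/- Under the iterate hypotheses, for every feasible occupancy measure q* ∈ Δ with D(q*) ≤ l (in particular for an optimal one), the objective value of the averaged estimate is nearly optimal: C(q̃) ≤ C(q*) + R/T + ε_br + ε_est, where ε_est = (C̄ + B·D̄)·ε_oe. -/
/-- ℓ¹ norm Σ_{h,s,a} |·| on functions {0,…,H} × S × A → ℝ. -/
def l1norm {S A : Type*} [Fintype S] [Fintype A] (H : ℕ) (q : ℕ → S → A → ℝ) : ℝ :=
  ∑ h ∈ Finset.range (H + 1), ∑ s : S, ∑ a : A, |q h s a|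

/-- Weighted total cost Σ_{h,s,a} q_h(s,a) c_h(s,a). -/
def costVal {S A : Type*} [Fintype S] [Fintype A] (H : ℕ) (c q : ℕ → S → A → ℝ) : ℝ :=
  ∑ h ∈ Finset.range (H + 1), ∑ s : S, ∑ a : A, q h s a * c h s a

/-- Lagrangian L(q, λ) = C(q) + λ[1]·(D(q) − l). -/
def lagrangian {S A : Type*} [Fintype S] [Fintype A] (H : ℕ) (c d : ℕ → S → A → ℝ)
    (l : ℝ) (q : ℕ → S → A → ℝ) (lam : ℝ × ℝ) : ℝ :=
  costVal H c q + lam.1 * (costVal H d q - l)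

/-- q ∈ Δ: the linear constraints defining occupancy measures of the finite-horizon MDP
with horizon H, initial state s0 and transition kernel p (where `p h s a s'` is the
probability of moving to `s'` from `s` under `a` at step `h`). -/
def IsOccupancy {S A : Type*} [Fintype S] [Fintype A] [DecidableEq S] (H : ℕ) (s0 : S)
    (p : ℕ → S → A → S → ℝ) (q : ℕ → S → A → ℝ) : Prop :=
  (∀ h ≤ H, ∀ (s : S) (a : A), 0 ≤ q h s a) ∧
  (∀ s : S, ∑ a : A, q 0 s a = if s = s0 then 1 else 0) ∧
  (∀ h < H, ∀ s : S, ∑ a : A, q (h + 1) s a = ∑ s' : S, ∑ a' : A, p h s' a' s * q h s' a')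

lemma costVal_sub_le {S A : Type*} [Fintype S] [Fintype A] (H : ℕ)
    (f q q' : ℕ → S → A → ℝ) (M : ℝ)
    (hM : ∀ h ≤ H, ∀ (s : S) (a : A), |f h s a| ≤ M) :
    costVal H f q' - costVal H f q ≤ M * l1norm H (fun h s a => q h s a - q' h s a) := by
  unfold costVal l1norm
  rw [← Finset.sum_sub_distrib, Finset.mul_sum]
  apply Finset.sum_le_sum; intro h hh
  rw [← Finset.sum_sub_distrib, Finset.mul_sum]
  apply Finset.sum_le_sum; intro s _
  rw [← Finset.sum_sub_distrib, Finset.mul_sum]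
  apply Finset.sum_le_sum; intro a _
  have hh' : h ≤ H := Nat.lt_succ_iff.mp (Finset.mem_range.mp hh)
  calc q' h s a * f h s a - q h s a * f h s a = (q' h s a - q h s a) * f h s a := by ring
    _ ≤ |(q' h s a - q h s a) * f h s a| := le_abs_self _
    _ = |q' h s a - q h s a| * |f h s a| := abs_mul _ _
    _ ≤ |q' h s a - q h s a| * M :=
        mul_le_mul_of_nonneg_left (hM h hh' s a) (abs_nonneg _)
    _ = M * |q h s a - q' h s a| := by rw [abs_sub_comm]; ring

lemma costVal_avg {S A : Type*} [Fintype S] [Fintype A] (H : ℕ) (c : ℕ → S → A → ℝ)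
    (T : ℕ) (qhat : ℕ → ℕ → S → A → ℝ) :
    costVal H c (fun h s a => (∑ t ∈ Finset.range T, qhat t h s a) / T)
      = (∑ t ∈ Finset.range T, costVal H c (qhat t)) / T := by
  unfold costVal
  simp only [Finset.sum_div, Finset.sum_mul, div_mul_eq_mul_div]
  conv_lhs => enter [2, h]; enter [2, s]; rw [Finset.sum_comm]
  conv_lhs => enter [2, h]; rw [Finset.sum_comm]
  rw [Finset.sum_comm]

theorem stmt3 {S A : Type*} [Fintype S] [Fintype A] [DecidableEq S] [Nonempty S] [Nonempty A]
    (H : ℕ) (s0 : S) (p : ℕ → S → A → S → ℝ)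
    (hp : ∀ h < H, ∀ (s : S) (a : A), (∀ s' : S, 0 ≤ p h s a s') ∧ ∑ s' : S, p h s a s' = 1)
    (c d : ℕ → S → A → ℝ) (Cbar Dbar : ℝ)
    (hc : ∀ h ≤ H, ∀ (s : S) (a : A), 0 ≤ c h s a ∧ c h s a ≤ Cbar)
    (hd : ∀ h ≤ H, ∀ (s : S) (a : A), 0 ≤ d h s a ∧ d h s a ≤ Dbar)
    (l B : ℝ) (hB : 0 < B) (T : ℕ) (hT : 1 ≤ T)
    (εbr εoe R : ℝ) (hεbr : 0 ≤ εbr) (hεoe : 0 ≤ εoe) (hR : 0 ≤ R)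
    (qt qhat : ℕ → ℕ → S → A → ℝ) (lam : ℕ → ℝ × ℝ)
    (hqt : ∀ t < T, IsOccupancy H s0 p (qt t))
    (hqhat : ∀ t < T, l1norm H (fun h s a => qt t h s a - qhat t h s a) ≤ εoe)
    (hlam : ∀ t < T, 0 ≤ (lam t).1 ∧ 0 ≤ (lam t).2 ∧ (lam t).1 + (lam t).2 = B)
    (hbr : ∀ t < T, ∀ q : ℕ → S → A → ℝ, IsOccupancy H s0 p q →
      lagrangian H c d l (qt t) (lam t) ≤ lagrangian H c d l q (lam t) + εbr)
    (hnr : ∀ μ : ℝ × ℝ, 0 ≤ μ.1 → 0 ≤ μ.2 → μ.1 + μ.2 = B →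
      (∑ t ∈ Finset.range T, lagrangian H c d l (qhat t) μ) -
        (∑ t ∈ Finset.range T, lagrangian H c d l (qhat t) (lam t)) ≤ R)
    (qtil : ℕ → S → A → ℝ)
    (hqtil : qtil = fun h s a => (∑ t ∈ Finset.range T, qhat t h s a) / T)
    (εest : ℝ) (hεest : εest = (Cbar + B * Dbar) * εoe) :
    ∀ qstar : ℕ → S → A → ℝ, IsOccupancy H s0 p qstar → costVal H d qstar ≤ l →
      costVal H c qtil ≤ costVal H c qstar + R / T + εbr + εest := by
  
  intro qstar hqs hDl
  have hTpos : (0:ℝ) < T := by exact_mod_cast Nat.lt_of_lt_of_le Nat.zero_lt_one hT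
  obtain ⟨s⟩ := ‹Nonempty S›
  obtain ⟨a⟩ := ‹Nonempty A›
  have hC0 : 0 ≤ Cbar := le_trans (hc 0 (Nat.zero_le _) s a).1 (hc 0 (Nat.zero_le _) s a).2
  have hD0 : 0 ≤ Dbar := le_trans (hd 0 (Nat.zero_le _) s a).1 (hd 0 (Nat.zero_le _) s a).2
  have key : ∀ t < T, lagrangian H c d l (qhat t) (lam t) ≤ costVal H c qstar + εbr + εest := by
    intro t ht
    have hln := hqhat t ht
    have hl1 := (hlam t ht).1
    have hl2 : (lam t).1 ≤ B := by
      have h := hlam t ht; linarith [h.2.1, h.2.2]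
    have hc' := costVal_sub_le H c (qt t) (qhat t) Cbar
      (fun h hh s' a' => abs_le.mpr ⟨by linarith [(hc h hh s' a').1], (hc h hh s' a').2⟩)
    have hd' := costVal_sub_le H d (qt t) (qhat t) Dbar
      (fun h hh s' a' => abs_le.mpr ⟨by linarith [(hd h hh s' a').1], (hd h hh s' a').2⟩)
    have A1 : costVal H c (qhat t) - costVal H c (qt t) ≤ Cbar * εoe :=
      le_trans hc' (mul_le_mul_of_nonneg_left hln hC0)
    have A2 : costVal H d (qhat t) - costVal H d (qt t) ≤ Dbar * εoe :=
      le_trans hd' (mul_le_mul_of_nonneg_left hln hD0)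
    have A3 : (lam t).1 * (costVal H d (qhat t) - costVal H d (qt t)) ≤ B * (Dbar * εoe) :=
      le_trans (mul_le_mul_of_nonneg_left A2 hl1)
        (mul_le_mul_of_nonneg_right hl2 (mul_nonneg hD0 hεoe))
    have hdiff : lagrangian H c d l (qhat t) (lam t) - lagrangian H c d l (qt t) (lam t)
        = (costVal H c (qhat t) - costVal H c (qt t))
          + (lam t).1 * (costVal H d (qhat t) - costVal H d (qt t)) := by
      simp only [lagrangian]; ring
    have h2 := hbr t ht qstar hqs
    have h3 : lagrangian H c d l qstar (lam t) ≤ costVal H c qstar := by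
      simp only [lagrangian]
      have : (lam t).1 * (costVal H d qstar - l) ≤ 0 :=
        mul_nonpos_of_nonneg_of_nonpos hl1 (by linarith)
      linarith
    have heest : εest = Cbar * εoe + B * (Dbar * εoe) := by rw [hεest]; ring
    linarith
  have sum1 : ∑ t ∈ Finset.range T, costVal H c (qhat t)
      ≤ (∑ t ∈ Finset.range T, lagrangian H c d l (qhat t) (lam t)) + R := by
    have hnr' := hnr (0, B) le_rfl hB.le (zero_add B)
    have heq : (∑ t ∈ Finset.range T, lagrangian H c d l (qhat t) ((0:ℝ), B))
        = ∑ t ∈ Finset.range T, costVal H c (qhat t) := by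
      apply Finset.sum_congr rfl; intro t _; simp [lagrangian]
    rw [heq] at hnr'
    linarith
  have sum2 : (∑ t ∈ Finset.range T, lagrangian H c d l (qhat t) (lam t))
      ≤ T * (costVal H c qstar + εbr + εest) := by
    calc (∑ t ∈ Finset.range T, lagrangian H c d l (qhat t) (lam t))
        ≤ ∑ _t ∈ Finset.range T, (costVal H c qstar + εbr + εest) :=
          Finset.sum_le_sum (fun t ht => key t (Finset.mem_range.mp ht))
      _ = T * (costVal H c qstar + εbr + εest) := by
          rw [Finset.sum_const, Finset.card_range, nsmul_eq_mul]
  rw [hqtil, costVal_avg, div_le_iff₀ hTpos]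
  have hRT : R / T * T = R := div_mul_cancel₀ R (ne_of_gt hTpos)
  nlinarith [sum1, sum2]
end

section
/- Under the iterate hypotheses, for every feasible occupancy measure q^f ∈ Δ with D(q^f) ≤ l, the averaged Lagrangian satisfies L(q̄, λ̃) ≤ C(q^f) + ε_ol + ε_est, where ε_est = (C̄ + B·D̄)·ε_oe and ε_ol = 2ε_br + 2ε_est + R/T. -/
/-!
Since `L(·, μ)` is affine, `L(q̄, λ̃)` is the average of the `L(q_t, λ̃)`. Along the chain
`L(q_t, λ̃) → L(q̂_t, λ̃) → L(q̂_t, λ_t) → L(q_t, λ_t) → L(q^f, λ_t) ≤ C(q^f)`, the two swaps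
between `q_t` and `q̂_t` each cost `ε_est`, since `L(·, μ)` is `(C̄ + μ[1] D̄)`-Lipschitz for
`‖·‖₁`; no-regret against the averaged multiplier `λ̃` costs `R/T` on average, best response
costs `ε_br`, and feasibility of `q^f` makes its penalty term nonpositive.
-/

open Finset

lemma sum_le_sum_add_card_mul {ι : Type*} {F : Finset ι} {f g : ι → ℝ} {e : ℝ}
    (h : ∀ i ∈ F, f i ≤ g i + e) : ∑ i ∈ F, f i ≤ ∑ i ∈ F, g i + #F * e := by
  simpa only [sum_add_distrib, sum_const, nsmul_eq_mul] using sum_le_sum h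

def scaledSimplex (B : ℝ) : Set (ℝ × ℝ) := {μ | 0 ≤ μ.1 ∧ 0 ≤ μ.2 ∧ μ.1 + μ.2 = B}

lemma average_mem_scaledSimplex {ι : Type*} {B : ℝ} {F : Finset ι} (hF : F.Nonempty)
    {lam : ι → ℝ × ℝ} (h : ∀ t ∈ F, lam t ∈ scaledSimplex B) :
    ((∑ t ∈ F, (lam t).1) / #F, (∑ t ∈ F, (lam t).2) / #F) ∈ scaledSimplex B := by
  have hF : (0 : ℝ) < #F := by exact_mod_cast hF.card_pos
  refine ⟨div_nonneg (sum_nonneg fun t ht => (h t ht).1) hF.le,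
    div_nonneg (sum_nonneg fun t ht => (h t ht).2.1) hF.le, ?_⟩
  rw [← add_div, ← sum_add_distrib, sum_congr rfl fun t ht => (h t ht).2.2, sum_const,
    nsmul_eq_mul, mul_div_cancel_left₀ _ hF.ne']

section Lagrangian

variable {S A : Type*} [Fintype S] [Fintype A] (H : ℕ)

lemma l1norm_nonneg (q : ℕ → S → A → ℝ) : 0 ≤ l1norm H q :=
  sum_nonneg fun _ _ => sum_nonneg fun _ _ => sum_nonneg fun _ _ => abs_nonneg _

lemma costVal_sub (c q q' : ℕ → S → A → ℝ) :
    costVal H c (fun h s a => q h s a - q' h s a) = costVal H c q - costVal H c q' := by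
  simp only [costVal, sub_mul, sum_sub_distrib]

lemma costVal_average {ι : Type*} (c : ℕ → S → A → ℝ) (F : Finset ι) (q : ι → ℕ → S → A → ℝ)
    (n : ℝ) :
    costVal H c (fun h s a => (∑ t ∈ F, q t h s a) / n) = (∑ t ∈ F, costVal H c (q t)) / n := by
  simp only [costVal, sum_div, sum_mul, div_mul_eq_mul_div]
  exact (sum_comm.trans <| sum_congr rfl fun h _ =>
    sum_comm.trans <| sum_congr rfl fun s _ => sum_comm).symm

lemma abs_costVal_le (c q : ℕ → S → A → ℝ) {M : ℝ}
    (hc : ∀ h ≤ H, ∀ (s : S) (a : A), |c h s a| ≤ M) :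
    |costVal H c q| ≤ M * l1norm H q := by
  rw [costVal, l1norm, mul_sum]
  refine (abs_sum_le_sum_abs _ _).trans (sum_le_sum fun h hh => ?_)
  rw [mul_sum]
  refine (abs_sum_le_sum_abs _ _).trans (sum_le_sum fun s _ => ?_)
  rw [mul_sum]
  refine (abs_sum_le_sum_abs _ _).trans (sum_le_sum fun a _ => ?_)
  rw [abs_mul, mul_comm M]
  exact mul_le_mul_of_nonneg_left (hc h (mem_range_succ_iff.mp hh) s a) (abs_nonneg _)

variable {c d : ℕ → S → A → ℝ} {l : ℝ}

lemma lagrangian_average {ι : Type*} {F : Finset ι} (hF : F.Nonempty)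
    (q : ι → ℕ → S → A → ℝ) (μ : ℝ × ℝ) :
    lagrangian H c d l (fun h s a => (∑ t ∈ F, q t h s a) / #F) μ =
      (∑ t ∈ F, lagrangian H c d l (q t) μ) / #F := by
  have hF : (#F : ℝ) ≠ 0 := by exact_mod_cast hF.card_pos.ne'
  simp only [lagrangian, costVal_average, sum_add_distrib, ← mul_sum, sum_sub_distrib,
    sum_const, nsmul_eq_mul]
  field_simp

lemma abs_lagrangian_sub_le {Cbar Dbar : ℝ} (hc : ∀ h ≤ H, ∀ (s : S) (a : A), |c h s a| ≤ Cbar)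
    (hd : ∀ h ≤ H, ∀ (s : S) (a : A), |d h s a| ≤ Dbar) (q q' : ℕ → S → A → ℝ) {μ : ℝ × ℝ}
    (hμ : 0 ≤ μ.1) :
    |lagrangian H c d l q μ - lagrangian H c d l q' μ| ≤
      (Cbar + μ.1 * Dbar) * l1norm H (fun h s a => q h s a - q' h s a) := by
  have hsplit : lagrangian H c d l q μ - lagrangian H c d l q' μ =
      costVal H c (fun h s a => q h s a - q' h s a) +
        μ.1 * costVal H d (fun h s a => q h s a - q' h s a) := by
    simp only [lagrangian, costVal_sub]
    ring
  rw [hsplit, add_mul, mul_assoc]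
  refine (abs_add_le _ _).trans (add_le_add (abs_costVal_le H c _ hc) ?_)
  rw [abs_mul, abs_of_nonneg hμ]
  exact mul_le_mul_of_nonneg_left (abs_costVal_le H d _ hd) hμ

lemma abs_lagrangian_sub_le_of_mem_scaledSimplex {Cbar Dbar B ε : ℝ}
    (hc : ∀ h ≤ H, ∀ (s : S) (a : A), 0 ≤ c h s a ∧ c h s a ≤ Cbar)
    (hd : ∀ h ≤ H, ∀ (s : S) (a : A), 0 ≤ d h s a ∧ d h s a ≤ Dbar) (hCbar : 0 ≤ Cbar)
    (hDbar : 0 ≤ Dbar) {q q' : ℕ → S → A → ℝ}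
    (hq : l1norm H (fun h s a => q h s a - q' h s a) ≤ ε) {μ : ℝ × ℝ}
    (hμ : μ ∈ scaledSimplex B) :
    |lagrangian H c d l q μ - lagrangian H c d l q' μ| ≤ (Cbar + B * Dbar) * ε := by
  obtain ⟨hμ1, hμ2, hμB⟩ := hμ
  have hcabs : ∀ h ≤ H, ∀ (s : S) (a : A), |c h s a| ≤ Cbar := fun h hh s a =>
    (abs_of_nonneg (hc h hh s a).1).trans_le (hc h hh s a).2
  have hdabs : ∀ h ≤ H, ∀ (s : S) (a : A), |d h s a| ≤ Dbar := fun h hh s a =>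
    (abs_of_nonneg (hd h hh s a).1).trans_le (hd h hh s a).2
  refine (abs_lagrangian_sub_le H hcabs hdabs q q' hμ1).trans ?_
  have hB : 0 ≤ B := hμB ▸ add_nonneg hμ1 hμ2
  exact mul_le_mul (by gcongr; linarith) hq (l1norm_nonneg H _) (by positivity)

lemma lagrangian_le_costVal_of_feasible {q : ℕ → S → A → ℝ} (hq : costVal H d q ≤ l)
    {μ : ℝ × ℝ} (hμ : 0 ≤ μ.1) : lagrangian H c d l q μ ≤ costVal H c q := by
  have : μ.1 * (costVal H d q - l) ≤ 0 := mul_nonpos_of_nonneg_of_nonpos hμ (by linarith)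
  rw [lagrangian]
  linarith

end Lagrangian

theorem stmt4_general {S A : Type*} [Fintype S] [Fintype A] [DecidableEq S] [Nonempty A]
    (H : ℕ) (s0 : S) (p : ℕ → S → A → S → ℝ)
    (c d : ℕ → S → A → ℝ) (Cbar Dbar : ℝ)
    (hc : ∀ h ≤ H, ∀ (s : S) (a : A), 0 ≤ c h s a ∧ c h s a ≤ Cbar)
    (hd : ∀ h ≤ H, ∀ (s : S) (a : A), 0 ≤ d h s a ∧ d h s a ≤ Dbar)
    (l B : ℝ) (hB : 0 < B) (T : ℕ) (hT : 1 ≤ T)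
    (εbr εoe R : ℝ) (hεbr : 0 ≤ εbr) (hεoe : 0 ≤ εoe)
    (qt qhat : ℕ → ℕ → S → A → ℝ) (lam : ℕ → ℝ × ℝ)
    (hqhat : ∀ t < T, l1norm H (fun h s a => qt t h s a - qhat t h s a) ≤ εoe)
    (hlam : ∀ t < T, 0 ≤ (lam t).1 ∧ 0 ≤ (lam t).2 ∧ (lam t).1 + (lam t).2 = B)
    (hbr : ∀ t < T, ∀ q : ℕ → S → A → ℝ, IsOccupancy H s0 p q →
      lagrangian H c d l (qt t) (lam t) ≤ lagrangian H c d l q (lam t) + εbr)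
    (hnr : ∀ μ : ℝ × ℝ, 0 ≤ μ.1 → 0 ≤ μ.2 → μ.1 + μ.2 = B →
      (∑ t ∈ Finset.range T, lagrangian H c d l (qhat t) μ) -
        (∑ t ∈ Finset.range T, lagrangian H c d l (qhat t) (lam t)) ≤ R)
    (qbar : ℕ → S → A → ℝ)
    (hqbar : qbar = fun h s a => (∑ t ∈ Finset.range T, qt t h s a) / T)
    (lamtil : ℝ × ℝ)
    (hlamtil : lamtil = ((∑ t ∈ Finset.range T, (lam t).1) / T,
                         (∑ t ∈ Finset.range T, (lam t).2) / T))
    (εest εol : ℝ) (hεest : εest = (Cbar + B * Dbar) * εoe)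
    (hεol : εol = 2 * εbr + 2 * εest + R / T) :
    ∀ qf : ℕ → S → A → ℝ, IsOccupancy H s0 p qf → costVal H d qf ≤ l →
      lagrangian H c d l qbar lamtil ≤ costVal H c qf + εol + εest := by
  intro qf hqf hfeas
  have hF : (range T).Nonempty := nonempty_range_iff.mpr (by omega)
  obtain ⟨a⟩ := ‹Nonempty A›
  have hCbar : 0 ≤ Cbar := (hc 0 H.zero_le s0 a).1.trans (hc 0 H.zero_le s0 a).2
  have hDbar : 0 ≤ Dbar := (hd 0 H.zero_le s0 a).1.trans (hd 0 H.zero_le s0 a).2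
  have hlam_mem : ∀ t ∈ range T, lam t ∈ scaledSimplex B := fun t ht => hlam t (mem_range.mp ht)
  have hlamtil_mem : lamtil ∈ scaledSimplex B := by
    simpa only [hlamtil, card_range] using average_mem_scaledSimplex hF hlam_mem
  have hest : ∀ t ∈ range T, ∀ μ ∈ scaledSimplex B,
      |lagrangian H c d l (qt t) μ - lagrangian H c d l (qhat t) μ| ≤ εest := fun t ht μ hμ =>
    hεest ▸ abs_lagrangian_sub_le_of_mem_scaledSimplex H hc hd hCbar hDbar
      (hqhat t (mem_range.mp ht)) hμ
  have hεest0 : 0 ≤ εest := hεest ▸ by positivity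
  have hsum : ∑ t ∈ range T, lagrangian H c d l (qt t) lamtil ≤
      T * (costVal H c qf + εbr + 2 * εest) + R := by
    have hswap_avg := sum_le_sum_add_card_mul fun t ht =>
      sub_le_iff_le_add'.mp (abs_le.mp (hest t ht lamtil hlamtil_mem)).2
    have hregret := hnr lamtil hlamtil_mem.1 hlamtil_mem.2.1 hlamtil_mem.2.2
    have hswap_lam := sum_le_sum_add_card_mul fun t ht =>
      neg_le_sub_iff_le_add.mp (abs_le.mp (hest t ht (lam t) (hlam_mem t ht))).1
    have hbest := sum_le_sum_add_card_mul fun t ht => hbr t (mem_range.mp ht) qf hqf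
    have hpenalty := sum_le_sum fun t ht =>
      lagrangian_le_costVal_of_feasible (c := c) H hfeas (hlam_mem t ht).1
    simp only [card_range, sum_const, nsmul_eq_mul] at hswap_avg hswap_lam hbest hpenalty
    linarith
  calc lagrangian H c d l qbar lamtil
        = (∑ t ∈ range T, lagrangian H c d l (qt t) lamtil) / T := by
        simpa only [hqbar, card_range] using lagrangian_average H hF qt lamtil
    _ ≤ (T * (costVal H c qf + εbr + 2 * εest) + R) / T := by gcongr
    _ = costVal H c qf + εbr + 2 * εest + R / T := by field_simp
    _ ≤ costVal H c qf + εol + εest := by rw [hεol]; linarith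

theorem stmt4 {S A : Type*} [Fintype S] [Fintype A] [DecidableEq S] [Nonempty S] [Nonempty A]
    (H : ℕ) (s0 : S) (p : ℕ → S → A → S → ℝ)
    (hp : ∀ h < H, ∀ (s : S) (a : A), (∀ s' : S, 0 ≤ p h s a s') ∧ ∑ s' : S, p h s a s' = 1)
    (c d : ℕ → S → A → ℝ) (Cbar Dbar : ℝ)
    (hc : ∀ h ≤ H, ∀ (s : S) (a : A), 0 ≤ c h s a ∧ c h s a ≤ Cbar)
    (hd : ∀ h ≤ H, ∀ (s : S) (a : A), 0 ≤ d h s a ∧ d h s a ≤ Dbar)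
    (l B : ℝ) (hB : 0 < B) (T : ℕ) (hT : 1 ≤ T)
    (εbr εoe R : ℝ) (hεbr : 0 ≤ εbr) (hεoe : 0 ≤ εoe) (hR : 0 ≤ R)
    (qt qhat : ℕ → ℕ → S → A → ℝ) (lam : ℕ → ℝ × ℝ)
    (hqt : ∀ t < T, IsOccupancy H s0 p (qt t))
    (hqhat : ∀ t < T, l1norm H (fun h s a => qt t h s a - qhat t h s a) ≤ εoe)
    (hlam : ∀ t < T, 0 ≤ (lam t).1 ∧ 0 ≤ (lam t).2 ∧ (lam t).1 + (lam t).2 = B)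
    (hbr : ∀ t < T, ∀ q : ℕ → S → A → ℝ, IsOccupancy H s0 p q →
      lagrangian H c d l (qt t) (lam t) ≤ lagrangian H c d l q (lam t) + εbr)
    (hnr : ∀ μ : ℝ × ℝ, 0 ≤ μ.1 → 0 ≤ μ.2 → μ.1 + μ.2 = B →
      (∑ t ∈ Finset.range T, lagrangian H c d l (qhat t) μ) -
        (∑ t ∈ Finset.range T, lagrangian H c d l (qhat t) (lam t)) ≤ R)
    (qbar : ℕ → S → A → ℝ)
    (hqbar : qbar = fun h s a => (∑ t ∈ Finset.range T, qt t h s a) / T)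
    (lamtil : ℝ × ℝ)
    (hlamtil : lamtil = ((∑ t ∈ Finset.range T, (lam t).1) / T,
                         (∑ t ∈ Finset.range T, (lam t).2) / T))
    (εest εol : ℝ) (hεest : εest = (Cbar + B * Dbar) * εoe)
    (hεol : εol = 2 * εbr + 2 * εest + R / T) :
    ∀ qf : ℕ → S → A → ℝ, IsOccupancy H s0 p qf → costVal H d qf ≤ l →
      lagrangian H c d l qbar lamtil ≤ costVal H c qf + εol + εest :=
  stmt4_general H s0 p c d Cbar Dbar hc hd l B hB T hT εbr εoe R hεbr hεoe qt qhat lam hqhat hlam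
    hbr hnr qbar hqbar lamtil hlamtil εest εol hεest hεol
end

section
/- Correctness of the flag construction for Φ_o = F_{[0,T_o]} G_{[0,T_in]} φ: with the flag f for the inner formula G_{[0,T_in]}φ, define Sat(t) = 1 if f(t) = T_in + 1 and Sat(t) = 0 otherwise, and define fin recursively by fin(T_in + 1) = Sat(T_in + 1) and fin(t+1) = max(Sat(t+1), fin(t)) for t ≥ T_in + 1. Then fin(T_o + T_in + 1) = 1 if and only if there exists an integer t ∈ {0,…,T_o} such that φ(s(t + t')) holds for every integer t' ∈ {0,…,T_in}, i.e., if and only if the discrete-time signal s satisfies F_{[0,T_o]} G_{[0,T_in]} φ at time 0. -/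
/-- Flag for the inner formula G_{[0,T_in]}φ: f(0) = 0, f(t+1) = min(f(t), T_in) + 1
if φ(s(t)), and f(t+1) = 0 otherwise. -/
def flagG {S : Type*} (s : ℕ → S) (φ : S → Prop) [DecidablePred φ] (Tin : ℕ) : ℕ → ℕ
  | 0 => 0
  | (t + 1) => if φ (s t) then min (flagG s φ Tin t) Tin + 1 else 0

lemma flagG_le {S : Type*} (s : ℕ → S) (φ : S → Prop) [DecidablePred φ] (Tin t : ℕ) :
    flagG s φ Tin t ≤ Tin + 1 := by
  cases t with
  | zero => simp [flagG]
  | succ t => simp only [flagG]; split <;> omega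

lemma flagG_ge {S : Type*} (s : ℕ → S) (φ : S → Prop) [DecidablePred φ] (Tin t : ℕ) :
    ∀ n, n ≤ Tin + 1 → (∀ j < n, φ (s (t + j))) → n ≤ flagG s φ Tin (t + n) := by
  intro n
  induction n with
  | zero => intro _ _; omega
  | succ n ih =>
    intro hn h
    have h1 : n ≤ flagG s φ Tin (t + n) := ih (by omega) fun j hj => h j (by omega)
    have h2 : φ (s (t + n)) := h n (by omega)
    show n + 1 ≤ flagG s φ Tin (t + n + 1)
    simp only [flagG, if_pos h2]
    omega

lemma flagG_back {S : Type*} (s : ℕ → S) (φ : S → Prop) [DecidablePred φ] (Tin : ℕ) :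
    ∀ t k, k ≤ flagG s φ Tin t → k ≤ t ∧ ∀ j < k, φ (s (t - 1 - j)) := by
  intro t
  induction t with
  | zero =>
    intro k hk
    simp only [flagG] at hk
    exact ⟨by omega, fun j hj => absurd hj (by omega)⟩
  | succ t ih =>
    intro k hk
    simp only [flagG] at hk
    by_cases hφ : φ (s t)
    · rw [if_pos hφ] at hk
      match k with
      | 0 => exact ⟨by omega, by omega⟩
      | k + 1 =>
        have hk' : k ≤ flagG s φ Tin t := by omega
        obtain ⟨h1, h2⟩ := ih k hk'
        refine ⟨by omega, ?_⟩
        intro j hj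
        match j with
        | 0 => simpa using hφ
        | j + 1 =>
          have := h2 j (by omega)
          have he : t + 1 - 1 - (j + 1) = t - 1 - j := by omega
          rwa [he]
    · rw [if_neg hφ] at hk
      exact ⟨by omega, by omega⟩

lemma Sat_iff {S : Type*} (s : ℕ → S) (φ : S → Prop) [DecidablePred φ] (Tin t : ℕ) :
    flagG s φ Tin (t + Tin + 1) = Tin + 1 ↔ ∀ t' ≤ Tin, φ (s (t + t')) := by
  constructor
  · intro h
    obtain ⟨h1, h2⟩ := flagG_back s φ Tin (t + Tin + 1) (Tin + 1) (by omega)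
    intro t' ht'
    have := h2 (Tin - t') (by omega)
    have he : t + Tin + 1 - 1 - (Tin - t') = t + t' := by omega
    rwa [he] at this
  · intro h
    have := flagG_ge s φ Tin t (Tin + 1) le_rfl (fun j hj => h j (by omega))
    have hle := flagG_le s φ Tin (t + Tin + 1)
    have he : t + (Tin + 1) = t + Tin + 1 := by omega
    rw [he] at this
    omega

/-- Correctness of the flag construction for Φ_o = F_{[0,T_o]} G_{[0,T_in]} φ. -/
theorem stmt17 {S : Type*} (s : ℕ → S) (φ : S → Prop) [DecidablePred φ] (To Tin : ℕ)
    (Sat : ℕ → ℕ) (hSat : ∀ t : ℕ, Sat t = if flagG s φ Tin t = Tin + 1 then 1 else 0)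
    (fin : ℕ → ℕ) (hfin0 : fin (Tin + 1) = Sat (Tin + 1))
    (hfin : ∀ t : ℕ, Tin + 1 ≤ t → fin (t + 1) = max (Sat (t + 1)) (fin t)) :
    fin (To + Tin + 1) = 1 ↔ ∃ t ≤ To, ∀ t' ≤ Tin, φ (s (t + t')) := by
  have hSat1 : ∀ t, Sat (t + Tin + 1) = 1 ↔ ∀ t' ≤ Tin, φ (s (t + t')) := by
    intro t
    rw [hSat, ← Sat_iff s φ Tin t]
    split <;> simp_all
  have hSatle : ∀ t, Sat t ≤ 1 := by intro t; rw [hSat]; split <;> omega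
  have key : ∀ T, fin (T + Tin + 1) ≤ 1 ∧
      (fin (T + Tin + 1) = 1 ↔ ∃ t ≤ T, Sat (t + Tin + 1) = 1) := by
    intro T
    induction T with
    | zero =>
      rw [show 0 + Tin + 1 = Tin + 1 from by omega]
      constructor
      · rw [hfin0]; exact hSatle _
      · rw [hfin0]
        constructor
        · intro h; exact ⟨0, le_rfl, by rw [show 0 + Tin + 1 = Tin + 1 from by omega]; exact h⟩
        · rintro ⟨t, ht, h⟩; interval_cases t
          rwa [show 0 + Tin + 1 = Tin + 1 from by omega] at h
    | succ T ih =>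
      obtain ⟨ih1, ih2⟩ := ih
      have heq : T + 1 + Tin + 1 = (T + Tin + 1) + 1 := by omega
      rw [heq, hfin (T + Tin + 1) (by omega)]
      have hs := hSatle (T + Tin + 1 + 1)
      constructor
      · omega
      · constructor
        · intro h
          have hc : Sat (T + Tin + 1 + 1) = 1 ∨ fin (T + Tin + 1) = 1 := by omega
          rcases hc with h1 | h1
          · exact ⟨T + 1, le_rfl, by rw [show T + 1 + Tin + 1 = T + Tin + 1 + 1 by omega]; omega⟩
          · obtain ⟨t, ht, h2⟩ := ih2.mp h1
            exact ⟨t, by omega, h2⟩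
        · rintro ⟨t, ht, h⟩
          rcases Nat.lt_or_ge t (T + 1) with hlt | hge
          · have := ih2.mpr ⟨t, by omega, h⟩; omega
          · have : t = T + 1 := by omega
            subst this
            rw [show T + 1 + Tin + 1 = T + Tin + 1 + 1 by omega] at h
            omega
  obtain ⟨_, h⟩ := key To
  rw [h]
  exact exists_congr fun t => and_congr_right fun _ => hSat1 t
end
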